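/- arXiv:2308.16837 — 9 statements merged into one kernel-verified Lean document; each statement's English description precedes it below -/
import Mathlib

section
/- For any tree T, the 2-limited packing partition number equals ⌈(Δ(T)+1)/2⌉, where Δ(T) is the maximum degree of T. -/
/-!
At a vertex of maximum degree `Δ`, the closed neighbourhood has `Δ + 1` vertices and each part
of a 2-limited packing partition contains at most two of them, so at least `⌈(Δ + 1) / 2⌉` parts
are needed. Conversely, take `m = ⌊Δ / 2⌋ + 1` colours, so that `deg v + 1 ≤ 2 m` everywhere, and
colour a forest along a leaf-elimination order: a newly coloured vertex `u` has at most one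
coloured neighbour `v`, the coloured vertices of `N[v]` number at most `deg v < 2 m`, so some
colour occurs at most once among them, and giving it to `u` keeps every colour class a 2-limited
packing.
-/


open SimpleGraph

/-- The closed neighborhood `N[v]` of a vertex. -/
def closedNbhd {V : Type*} (G : SimpleGraph V) (v : V) : Set V :=
  insert v (G.neighborSet v)

/-- `B` is a `k`-limited packing: every closed neighborhood contains at most `k` vertices of `B`. -/
def IsLimitedPacking {V : Type*} (G : SimpleGraph V) (k : ℕ) (B : Set V) : Prop :=
  ∀ v : V, (B ∩ closedNbhd G v).ncard ≤ k

/-- `P` is a partition of the vertex set of `G` into `k`-limited packing sets. -/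
def IsLPPartition {V : Type*} (G : SimpleGraph V) (k : ℕ) (P : Finset (Set V)) : Prop :=
  (∀ B ∈ P, IsLimitedPacking G k B) ∧ (∀ v : V, ∃! B : Set V, B ∈ P ∧ v ∈ B)

/-- The `k`-limited packing partition number `χ_{×k}(G)`: minimum number of parts in a
partition of the vertex set into `k`-limited packing sets. -/
noncomputable def chiLP {V : Type*} (G : SimpleGraph V) (k : ℕ) : ℕ :=
  sInf {n | ∃ P : Finset (Set V), IsLPPartition G k P ∧ P.card = n}

namespace SimpleGraph

variable {V : Type*} {G : SimpleGraph V}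

theorem IsAcyclic.exists_subsingleton_neighborSet [Finite V] [Nonempty V] (hG : G.IsAcyclic) :
    ∃ u, (G.neighborSet u).Subsingleton := by
  obtain ⟨u, v, p, hp, hmax⟩ := Walk.exists_isPath_forall_isPath_length_le_length G
  -- a neighbour off the longest path `p` would extend it, so every neighbour of `u` is `p.snd`
  have hsnd : ∀ w, G.Adj u w → w = p.snd := fun w huw =>
    hG.eq_snd_of_adj_start hp huw <| by
      by_contra hw
      simpa using hmax _ _ _ (hp.cons (h := huw.symm) hw)
  exact ⟨u, fun w hw w' hw' => (hsnd w hw).trans (hsnd w' hw').symm⟩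

theorem IsAcyclic.exists_mem_subsingleton_adj [Finite V] (hG : G.IsAcyclic) {s : Set V}
    (hs : s.Nonempty) : ∃ u ∈ s, {w ∈ s | G.Adj u w}.Subsingleton := by
  have := hs.to_subtype
  obtain ⟨⟨u, hu⟩, hsub⟩ := (hG.induce s).exists_subsingleton_neighborSet
  refine ⟨u, hu, fun w hw w' hw' => ?_⟩
  exact congrArg Subtype.val (hsub (x := ⟨w, hw.1⟩) (y := ⟨w', hw'.1⟩) hw.2 hw'.2)

end SimpleGraph

theorem Int.ceil_natCast_add_one_div_two (n : ℕ) : ⌈((n : ℚ) + 1) / 2⌉ = ((n / 2 + 1 : ℕ) : ℤ) := by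
  rw [Int.ceil_eq_iff]
  obtain ⟨q, rfl | rfl⟩ := Nat.even_or_odd' n
  · rw [Nat.mul_div_cancel_left q two_pos]
    constructor <;> push_cast <;> linarith
  · rw [show (2 * q + 1) / 2 = q by omega]
    constructor <;> push_cast <;> linarith

open Finset

section ClosedNbhdFinset

variable {V : Type*} [Fintype V] [DecidableEq V] (G : SimpleGraph V) [DecidableRel G.Adj]

def closedNbhdFinset (v : V) : Finset V :=
  insert v (G.neighborFinset v)

variable {G}

@[simp]
theorem mem_closedNbhdFinset {v x : V} : x ∈ closedNbhdFinset G v ↔ x ∈ closedNbhd G v := by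
  simp [closedNbhdFinset, closedNbhd]

theorem card_closedNbhdFinset (v : V) : #(closedNbhdFinset G v) = G.degree v + 1 := by
  rw [closedNbhdFinset, card_insert_of_notMem (by simp), card_neighborFinset_eq_degree]

theorem isLimitedPacking_iff_card {k : ℕ} {B : Set V} [DecidablePred (· ∈ B)] :
    IsLimitedPacking G k B ↔ ∀ v, #{x ∈ closedNbhdFinset G v | x ∈ B} ≤ k := by
  refine forall_congr' fun v => ?_
  rw [← Set.ncard_coe_finset]
  congr!
  ext x
  simp [and_comm]

theorem IsLPPartition.degree_add_one_le {k : ℕ} {P : Finset (Set V)} (hP : IsLPPartition G k P)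
    (v : V) : G.degree v + 1 ≤ k * #P := by
  classical
  choose part hpart using fun x => (hP.2 x).exists
  rw [← card_closedNbhdFinset]
  refine card_le_mul_card_image_of_maps_to (fun x _ => (hpart x).1) k fun B hB => ?_
  calc #{x ∈ closedNbhdFinset G v | part x = B}
      ≤ #{x ∈ closedNbhdFinset G v | x ∈ B} :=
        card_le_card fun x hx => by
          simp only [mem_filter] at hx ⊢
          exact ⟨hx.1, hx.2 ▸ (hpart x).2⟩
    _ ≤ k := isLimitedPacking_iff_card.mp (hP.1 B hB) v

end ClosedNbhdFinset

theorem isLPPartition_image_fibers {V ι : Type*} {G : SimpleGraph V} [Fintype ι]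
    [DecidableEq (Set V)] {k : ℕ} (c : V → ι) (hc : ∀ i, IsLimitedPacking G k (c ⁻¹' {i})) :
    IsLPPartition G k (univ.image fun i => c ⁻¹' {i}) := by
  refine ⟨by simpa using hc, fun v => ⟨c ⁻¹' {c v}, by simp, ?_⟩⟩
  rintro _ ⟨hB, hvB⟩
  obtain ⟨i, -, rfl⟩ := mem_image.mp hB
  rw [show i = c v from hvB.symm]

theorem chiLP_le_card {V : Type*} {G : SimpleGraph V} {k : ℕ}
    {P : Finset (Set V)} (hP : IsLPPartition G k P) : chiLP G k ≤ #P :=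
  Nat.sInf_le ⟨P, hP, rfl⟩

theorem exists_isLPPartition_card_eq_chiLP {V : Type*} {G : SimpleGraph V} {k : ℕ}
    (h : ∃ P, IsLPPartition G k P) : ∃ P, IsLPPartition G k P ∧ #P = chiLP G k :=
  let ⟨P, hP⟩ := h
  Nat.sInf_mem (s := {n | ∃ P, IsLPPartition G k P ∧ #P = n}) ⟨#P, P, hP, rfl⟩

section Coloring

variable {V : Type*} [Fintype V] [DecidableEq V] {G : SimpleGraph V} [DecidableRel G.Adj] {m : ℕ}

theorem card_inter_closedNbhdFinset_le_two {s : Finset V} {u : V}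
    (hleaf : {w ∈ (s : Set V) | G.Adj u w}.Subsingleton) :
    #(s ∩ closedNbhdFinset G u) ≤ 2 := by
  have hnbrs : #{w ∈ s | G.Adj u w} ≤ 1 :=
    card_le_one.mpr fun a ha b hb => hleaf (mem_filter.mp ha) (mem_filter.mp hb)
  calc #(s ∩ closedNbhdFinset G u) ≤ #(insert u {w ∈ s | G.Adj u w}) :=
        card_le_card fun x hx => by
          simp only [mem_inter, mem_closedNbhdFinset, closedNbhd, Set.mem_insert_iff,
            mem_neighborSet] at hx
          simp only [mem_insert, mem_filter]
          tauto
    _ ≤ 2 := (card_insert_le _ _).trans (by omega)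

theorem exists_color_card_le_one {u v : V} (hdeg : G.degree v < 2 * m) (c : V → Fin m)
    {s : Finset V} (hu : u ∉ s) (huv : G.Adj u v) :
    ∃ i, #{x ∈ s ∩ closedNbhdFinset G v | c x = i} ≤ 1 := by
  have hcard : #(s ∩ closedNbhdFinset G v) < #(univ : Finset (Fin m)) * 2 := by
    calc #(s ∩ closedNbhdFinset G v)
        ≤ #((closedNbhdFinset G v).erase u) := card_le_card fun x hx =>
          mem_erase.mpr ⟨fun h => hu (h ▸ (mem_inter.mp hx).1), (mem_inter.mp hx).2⟩
      _ = G.degree v := by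
          rw [card_erase_of_mem (by simp [closedNbhd, huv.symm]), card_closedNbhdFinset]; rfl
      _ < #(univ : Finset (Fin m)) * 2 := by
          rw [card_univ, Fintype.card_fin]; omega
  obtain ⟨i, -, hi⟩ := exists_card_fiber_lt_of_card_lt_mul hcard
  exact ⟨i, Nat.lt_succ_iff.mp hi⟩

theorem exists_color_card_le_one_of_subsingleton
    (hdeg : ∀ v, G.degree v + 1 ≤ 2 * m) (c : V → Fin m) {s : Finset V} {u : V}
    (hleaf : {w ∈ (s : Set V) | G.Adj u w}.Subsingleton) :
    ∃ i, ∀ v ∈ s, G.Adj u v → #{x ∈ s.erase u ∩ closedNbhdFinset G v | c x = i} ≤ 1 := by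
  by_cases h : ∃ v ∈ s, G.Adj u v
  · obtain ⟨v₀, hv₀, huv₀⟩ := h
    have hdeg₀ : G.degree v₀ < 2 * m := by have := hdeg v₀; omega
    obtain ⟨i, hi⟩ := exists_color_card_le_one hdeg₀ c (s.notMem_erase u) huv₀
    exact ⟨i, fun v hv huv => hleaf ⟨hv₀, huv₀⟩ ⟨hv, huv⟩ ▸ hi⟩
  · push Not at h
    exact ⟨⟨0, by have := hdeg u; omega⟩, fun v hv huv => absurd huv (h v hv)⟩

theorem SimpleGraph.IsAcyclic.exists_coloring_on (hG : G.IsAcyclic)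
    (hdeg : ∀ v, G.degree v + 1 ≤ 2 * m) (s : Finset V) :
    ∃ c : V → Fin m, ∀ v ∈ s, ∀ i, #{x ∈ s ∩ closedNbhdFinset G v | c x = i} ≤ 2 := by
  induction s using Finset.strongInduction with
  | H s ih =>
  obtain rfl | hs := s.eq_empty_or_nonempty
  · exact ⟨fun v => ⟨0, by have := hdeg v; omega⟩, by simp⟩
  obtain ⟨u, hu, hleaf⟩ := hG.exists_mem_subsingleton_adj (s := ↑s) hs
  obtain ⟨c, hc⟩ := ih _ (s.erase_ssubset hu)
  obtain ⟨i₀, hi₀⟩ := exists_color_card_le_one_of_subsingleton hdeg c hleaf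
  refine ⟨Function.update c u i₀, fun v hv i => ?_⟩
  by_cases hvu : v = u
  · subst hvu
    exact (card_filter_le _ _).trans (card_inter_closedNbhdFinset_le_two hleaf)
  have hsub : {x ∈ s ∩ closedNbhdFinset G v | Function.update c u i₀ x = i} ⊆
      insert u {x ∈ s.erase u ∩ closedNbhdFinset G v | c x = i} := by
    intro x hx
    rcases eq_or_ne x u with rfl | hxu
    · exact mem_insert_self _ _
    · simp_all
  by_cases hnew : G.Adj u v ∧ i = i₀
  · obtain ⟨huv, rfl⟩ := hnew
    calc _ ≤ #(insert u {x ∈ s.erase u ∩ closedNbhdFinset G v | c x = i}) := card_le_card hsub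
      _ ≤ 2 := (card_insert_le _ _).trans (by have := hi₀ v hv huv; omega)
  · have hu_notMem : u ∉ {x ∈ s ∩ closedNbhdFinset G v | Function.update c u i₀ x = i} := by
      simp only [mem_filter, mem_inter, mem_closedNbhdFinset, closedNbhd, Set.mem_insert_iff,
        mem_neighborSet, Function.update_self]
      rintro ⟨⟨-, huv | hvu'⟩, rfl⟩
      exacts [hvu huv.symm, hnew ⟨hvu'.symm, rfl⟩]
    exact (card_le_card ((subset_insert_iff_of_notMem hu_notMem).mp hsub)).trans
      (hc v (mem_erase.mpr ⟨hvu, hv⟩) i)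

theorem SimpleGraph.IsAcyclic.exists_coloring_isLimitedPacking (hG : G.IsAcyclic)
    (hdeg : ∀ v, G.degree v + 1 ≤ 2 * m) :
    ∃ c : V → Fin m, ∀ i, IsLimitedPacking G 2 (c ⁻¹' {i}) := by
  classical
  obtain ⟨c, hc⟩ := hG.exists_coloring_on hdeg univ
  exact ⟨c, fun i => isLimitedPacking_iff_card.mpr fun v => by
    simpa [filter_inter, inter_comm] using hc v (mem_univ v) i⟩

end Coloring

/-- For any tree `T`, `χ_{×2}(T) = ⌈(Δ(T)+1)/2⌉`. -/
theorem chiLP_two_of_tree {V : Type*} [Fintype V]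
    (T : SimpleGraph V) [DecidableRel T.Adj] (hT : T.IsTree) :
    (chiLP T 2 : ℤ) = ⌈((T.maxDegree : ℚ) + 1) / 2⌉ := by
  classical
  set k := T.maxDegree / 2 + 1
  obtain ⟨c, hc⟩ := hT.isAcyclic.exists_coloring_isLimitedPacking (m := k) fun v => by
    have := T.degree_le_maxDegree v
    omega
  have hP := isLPPartition_image_fibers c hc
  have hle : chiLP T 2 ≤ k := (chiLP_le_card hP).trans (card_image_le.trans (by simp))
  obtain ⟨Q, hQ, hQcard⟩ := exists_isLPPartition_card_eq_chiLP ⟨_, hP⟩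
  have : Nonempty V := hT.connected.nonempty
  obtain ⟨v, hv⟩ := T.exists_maximal_degree_vertex
  have hge := hQ.degree_add_one_le v
  rw [Int.ceil_natCast_add_one_div_two, show chiLP T 2 = k by omega]
end

section
/- For any graph G, the 2-limited packing partition number satisfies χ_{×2}(G) ≤ ⌈χ₂(G)/2⌉, where χ₂(G) is the 2-distance chromatic number of G. -/
open SimpleGraph

/-- A `2`-distance coloring with `n` colors: vertices at distance at most `2` get
different colors. -/
def Is2DistanceColoring {V : Type*} (G : SimpleGraph V) (n : ℕ) (c : V → Fin n) : Prop :=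
  ∀ u v : V, u ≠ v → (G.Adj u v ∨ ∃ w : V, G.Adj u w ∧ G.Adj w v) → c u ≠ c v

/-- The `2`-distance chromatic number `χ₂(G)`. -/
noncomputable def chi2Dist {V : Type*} (G : SimpleGraph V) : ℕ :=
  sInf {n | ∃ c : V → Fin n, Is2DistanceColoring G n c}


lemma adj_or_exists_adj_adj_of_mem_closedNbhd {V : Type*} {G : SimpleGraph V} {v a b : V}
    (ha : a ∈ closedNbhd G v) (hb : b ∈ closedNbhd G v) (hab : a ≠ b) :
    G.Adj a b ∨ ∃ w, G.Adj a w ∧ G.Adj w b := by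
  rcases ha with rfl | ha <;> rcases hb with rfl | hb
  · exact absurd rfl hab
  · exact Or.inl hb
  · exact Or.inl ha.symm
  · exact Or.inr ⟨v, ha.symm, hb⟩

lemma Is2DistanceColoring.injOn_closedNbhd {V : Type*} {G : SimpleGraph V} {n : ℕ}
    {c : V → Fin n} (hc : Is2DistanceColoring G n c) (v : V) :
    Set.InjOn c (closedNbhd G v) := fun a ha b hb hcab => by
  by_contra hab
  exact hc a b hab (adj_or_exists_adj_adj_of_mem_closedNbhd ha hb hab) hcab

lemma exists_is2DistanceColoring_chi2Dist {V : Type*} [Finite V] (G : SimpleGraph V) :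
    ∃ c : V → Fin (chi2Dist G), Is2DistanceColoring G (chi2Dist G) c :=
  Nat.sInf_mem (s := {n | ∃ c : V → Fin n, Is2DistanceColoring G n c})
    ⟨Nat.card V, Finite.equivFin V, fun _ _ hab _ h => hab ((Finite.equivFin V).injective h)⟩

lemma isLimitedPacking_of_injOn {V : Type*} {G : SimpleGraph V} {k : ℕ} {B : Set V}
    (g : V → Fin k) (hg : ∀ v, Set.InjOn g (B ∩ closedNbhd G v)) :
    IsLimitedPacking G k B := fun v => by
  simpa using Set.ncard_le_ncard_of_injOn g (fun _ _ => Set.mem_univ _) (hg v) Set.finite_univ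

lemma chiLP_le_of_forall_isLimitedPacking_fiber {V : Type*} {G : SimpleGraph V} {k m : ℕ}
    (f : V → Fin m) (hf : ∀ j, IsLimitedPacking G k (f ⁻¹' {j})) : chiLP G k ≤ m := by
  classical
  let P : Finset (Set V) := Finset.univ.image fun j => f ⁻¹' {j}
  have hP : IsLPPartition G k P := by
    refine ⟨by simpa [P] using hf, fun v => ⟨f ⁻¹' {f v}, by simp [P], ?_⟩⟩
    rintro B ⟨hB, hvB⟩
    obtain ⟨j, -, rfl⟩ := Finset.mem_image.mp hB
    rw [show j = f v from hvB.symm]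
  calc chiLP G k ≤ P.card := Nat.sInf_le ⟨P, hP, rfl⟩
    _ ≤ m := Finset.card_image_le.trans (Finset.card_fin m).le

/-- Merging the colour classes of a `2`-distance colouring in blocks of `k` consecutive colours
gives `k`-limited packings: the colour modulo `k` tells apart the vertices of a block lying in a
common closed neighborhood. -/
theorem chiLP_le_chi2Dist_add_sub_one_div {V : Type*} [Finite V] (G : SimpleGraph V) {k : ℕ}
    (hk : 0 < k) : chiLP G k ≤ (chi2Dist G + k - 1) / k := by
  obtain ⟨c, hc⟩ := exists_is2DistanceColoring_chi2Dist G
  have hblock (i : Fin (chi2Dist G)) : (i : ℕ) / k < (chi2Dist G + k - 1) / k := by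
    rw [Nat.lt_iff_add_one_le, ← Nat.add_div_right _ hk]
    exact Nat.div_le_div_right (by omega)
  refine chiLP_le_of_forall_isLimitedPacking_fiber (fun v => ⟨c v / k, hblock (c v)⟩) fun j => ?_
  refine isLimitedPacking_of_injOn (fun v => ⟨c v % k, Nat.mod_lt _ hk⟩) fun v a ha b hb hab => ?_
  refine hc.injOn_closedNbhd v ha.2 hb.2 (Fin.ext ?_)
  rw [← Nat.div_add_mod (c a) k, ← Nat.div_add_mod (c b) k]
  have hdiv : (c a : ℕ) / k = c b / k := congrArg Fin.val (ha.1.trans hb.1.symm)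
  have hmod : (c a : ℕ) % k = c b % k := congrArg Fin.val hab
  rw [hdiv, hmod]

/-- For any graph `G`, `χ_{×2}(G) ≤ ⌈χ₂(G)/2⌉`. -/
theorem chiLP_le_ceil_chi2 {V : Type*} [Fintype V] (G : SimpleGraph V) :
    chiLP G 2 ≤ (chi2Dist G + 1) / 2 :=
  chiLP_le_chi2Dist_add_sub_one_div G two_pos
end

section
/- Let G be a connected graph of order n ≥ 2 and H a graph of order at least 2. Then L₂(G∘H) ≤ 2(n − Δ(G)), where G∘H is the lexicographic product and Δ(G) the maximum degree of G. -/
/-!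
Every fibre `{g} × W` of `G ∘ H` lies in the closed neighbourhood of any vertex over a neighbour
of `g`, so a `2`-limited packing meets each fibre in at most two vertices. Over the closed
neighbourhood `N[v]` of a vertex `v` of maximum degree the whole packing still has at most two
vertices: a packing vertex over `N(v)` sees the entire fibre over `v`, and a packing vertex over
`v` sees everything over `N(v)`. Counting the remaining `n - Δ(G) - 1` fibres gives the bound.
-/

open SimpleGraph

/-- The `2`-limited packing number `L₂(G)`: maximum size of a `2`-limited packing. -/
noncomputable def L2 {V : Type*} (G : SimpleGraph V) : ℕ :=
  sSup {n | ∃ B : Set V, IsLimitedPacking G 2 B ∧ B.ncard = n}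

/-- The lexicographic product `G ∘ H` of two simple graphs. -/
def lexProd {V W : Type*} (G : SimpleGraph V) (H : SimpleGraph W) : SimpleGraph (V × W) where
  Adj x y := G.Adj x.1 y.1 ∨ (x.1 = y.1 ∧ H.Adj x.2 y.2)
  symm := by
    constructor
    rintro ⟨a, b⟩ ⟨c, d⟩ (h | ⟨h1, h2⟩)
    · exact Or.inl h.symm
    · exact Or.inr ⟨h1.symm, h2.symm⟩
  loopless := by
    constructor
    rintro ⟨a, b⟩ (h | ⟨h1, h2⟩)
    · exact G.irrefl h
    · exact H.irrefl h2

open Finset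

section LimitedPacking

variable {V : Type*} {G : SimpleGraph V} {k : ℕ} {T S : Finset V}

theorem IsLimitedPacking.card_le_of_subset_closedNbhd (hT : IsLimitedPacking G k T)
    (hST : S ⊆ T) {x : V} (hS : (S : Set V) ⊆ closedNbhd G x) : #S ≤ k := by
  calc #S = (S : Set V).ncard := (Set.ncard_coe_finset S).symm
    _ ≤ ((T : Set V) ∩ closedNbhd G x).ncard :=
      Set.ncard_le_ncard (Set.subset_inter (by exact_mod_cast hST) hS)
        (T.finite_toSet.inter_of_left _)
    _ ≤ k := hT x

theorem IsLimitedPacking.card_add_one_le (hT : IsLimitedPacking G k T) (hST : S ⊆ T) {x : V}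
    (hx : x ∈ T) (hS : ∀ y ∈ S, G.Adj x y) : #S + 1 ≤ k := by
  classical
  have hxS : x ∉ S := fun h => G.irrefl (hS x h)
  rw [← card_insert_of_notMem hxS]
  refine hT.card_le_of_subset_closedNbhd (insert_subset hx hST) (x := x) ?_
  intro y hy
  rcases mem_insert.mp hy with rfl | hy
  · exact Set.mem_insert _ _
  · exact Set.mem_insert_of_mem _ (hS y hy)

theorem L2_le_of_forall_card_le {m : ℕ}
    (h : ∀ T : Finset V, IsLimitedPacking G 2 T → #T ≤ m) : L2 G ≤ m := by
  refine csSup_le ⟨0, ∅, fun _ => by simp, Set.ncard_empty _⟩ ?_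
  rintro _ ⟨B, hB, rfl⟩
  rcases B.finite_or_infinite with hfin | hinf
  · lift B to Finset V using hfin
    rw [Set.ncard_coe_finset]
    exact h B hB
  · simp [hinf.ncard]

end LimitedPacking

theorem Finset.card_le_card_filter_fst_mem_add {α β : Type*} [Fintype α] [DecidableEq α]
    (T : Finset (α × β)) (A : Finset α) {k : ℕ} (hk : ∀ a, #{x ∈ T | x.1 = a} ≤ k) :
    #T ≤ #{x ∈ T | x.1 ∈ A} + k * (Fintype.card α - #A) := by
  rw [← card_filter_add_card_filter_not (s := T) (fun x => x.1 ∈ A), ← card_compl]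
  gcongr
  refine card_le_mul_card_image_of_maps_to (f := Prod.fst) (fun x hx => ?_) k fun a _ => ?_
  · exact mem_compl.mpr (mem_filter.mp hx).2
  · exact (card_le_card (filter_subset_filter _ (filter_subset _ _))).trans (hk a)

section LexProd

variable {V W : Type*} {G : SimpleGraph V} {H : SimpleGraph W} {T S : Finset (V × W)}

theorem lexProd_adj_of_adj_fst {x y : V × W} (h : G.Adj x.1 y.1) : (lexProd G H).Adj x y :=
  Or.inl h

theorem IsLimitedPacking.card_le_two_of_forall_adj_fst (hT : IsLimitedPacking (lexProd G H) 2 T)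
    (hST : S ⊆ T) {u : V} (hS : ∀ y ∈ S, G.Adj u y.1) : #S ≤ 2 := by
  obtain rfl | ⟨⟨g, w⟩, hgw⟩ := S.eq_empty_or_nonempty
  · simp
  refine hT.card_le_of_subset_closedNbhd hST (x := (u, w)) fun y hy => ?_
  exact Set.mem_insert_of_mem _ (lexProd_adj_of_adj_fst (hS y hy))

theorem IsLimitedPacking.card_filter_fst_eq_le [DecidableEq V]
    (hT : IsLimitedPacking (lexProd G H) 2 T) {u g : V} (hug : G.Adj u g) :
    #{x ∈ T | x.1 = g} ≤ 2 :=
  hT.card_le_two_of_forall_adj_fst (filter_subset _ _) fun _ hy => (mem_filter.mp hy).2 ▸ hug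

theorem IsLimitedPacking.card_filter_fst_mem_closedNbhd_le [Fintype V] [DecidableEq V]
    [DecidableRel G.Adj]
    (hT : IsLimitedPacking (lexProd G H) 2 T) {u v : V} (huv : G.Adj u v) :
    #{x ∈ T | x.1 ∈ insert v (G.neighborFinset v)} ≤ 2 := by
  classical
  set S₁ := {x ∈ T | x.1 = v}
  set S₂ := {x ∈ T | G.Adj v x.1}
  have hsplit : #{x ∈ T | x.1 ∈ insert v (G.neighborFinset v)} ≤ #S₁ + #S₂ := by
    simp only [mem_insert, mem_neighborFinset]
    rw [filter_or]
    exact card_union_le _ _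
  have h₁ : #S₁ ≤ 2 := hT.card_filter_fst_eq_le huv
  have h₂ : #S₂ ≤ 2 :=
    hT.card_le_two_of_forall_adj_fst (filter_subset _ _) fun _ hy => (mem_filter.mp hy).2
  have h₁₂ : S₂.Nonempty → #S₁ + 1 ≤ 2 := fun ⟨y, hy⟩ => by
    refine hT.card_add_one_le (filter_subset _ _) (filter_subset _ _ hy) fun x hx => ?_
    exact lexProd_adj_of_adj_fst ((mem_filter.mp hx).2 ▸ (mem_filter.mp hy).2.symm)
  have h₂₁ : S₁.Nonempty → #S₂ + 1 ≤ 2 := fun ⟨x, hx⟩ => by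
    refine hT.card_add_one_le (filter_subset _ _) (filter_subset _ _ hx) fun y hy => ?_
    exact lexProd_adj_of_adj_fst ((mem_filter.mp hx).2 ▸ (mem_filter.mp hy).2)
  rw [← card_pos] at h₁₂ h₂₁
  omega

end LexProd

theorem L2_lexProd_le_general {V W : Type*} [Fintype V]
    (G : SimpleGraph V) [DecidableRel G.Adj] (H : SimpleGraph W)
    (hG : G.Connected) (hn : 2 ≤ Fintype.card V) :
    L2 (lexProd G H) ≤ 2 * (Fintype.card V - G.maxDegree) := by
  classical
  have : Nontrivial V := Fintype.one_lt_card_iff_nontrivial.mp hn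
  have hadj (g : V) : ∃ u, G.Adj u g := (hG.preconnected.exists_adj_of_nontrivial g).imp
    fun _ h => h.symm
  obtain ⟨v, hv⟩ := G.exists_maximal_degree_vertex
  obtain ⟨u, huv⟩ := hadj v
  have hΔ : G.maxDegree < Fintype.card V := G.maxDegree_lt_card_verts
  refine L2_le_of_forall_card_le fun T hT => ?_
  calc #T ≤ #{x ∈ T | x.1 ∈ insert v (G.neighborFinset v)}
          + 2 * (Fintype.card V - #(insert v (G.neighborFinset v))) :=
        T.card_le_card_filter_fst_mem_add _ fun g => (hadj g).elim fun _ h =>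
          hT.card_filter_fst_eq_le h
    _ ≤ 2 + 2 * (Fintype.card V - (G.maxDegree + 1)) := by
        rw [card_insert_of_notMem (G.notMem_neighborFinset_self v), card_neighborFinset_eq_degree,
          hv]
        gcongr
        exact hT.card_filter_fst_mem_closedNbhd_le huv
    _ = 2 * (Fintype.card V - G.maxDegree) := by omega

/-- For a connected graph `G` of order `n ≥ 2` and a graph `H` of order at least `2`,
`L₂(G ∘ H) ≤ 2(n − Δ(G))`. -/
theorem L2_lexProd_le {V W : Type*} [Fintype V] [Fintype W]
    (G : SimpleGraph V) [DecidableRel G.Adj] (H : SimpleGraph W)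
    (hG : G.Connected) (hn : 2 ≤ Fintype.card V) (hH : 2 ≤ Fintype.card W) :
    L2 (lexProd G H) ≤ 2 * (Fintype.card V - G.maxDegree) :=
  L2_lexProd_le_general G H hG hn
end

section
/- Let G be a graph with a cycle such that not every set of three vertices of G has a common neighbor. Then L_{2,t}(G) ≥ g(G), where g(G) is the girth of G. -/
open SimpleGraph

/-- `B` is a `k`-total limited packing: every open neighborhood contains at most `k`
vertices of `B`. -/
def IsTotalLimitedPacking {V : Type*} (G : SimpleGraph V) (k : ℕ) (B : Set V) : Prop :=
  ∀ v : V, (B ∩ G.neighborSet v).ncard ≤ k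

/-- The `2`-total limited packing number `L_{2,t}(G)`. -/
noncomputable def L2t {V : Type*} (G : SimpleGraph V) : ℕ :=
  sSup {n | ∃ B : Set V, IsTotalLimitedPacking G 2 B ∧ B.ncard = n}

/-! Let `C` be a shortest cycle, of length `g`. If `g = 3`, three vertices without a common
neighbour form a 2TLP of size 3. If `g ≥ 4`, the vertex set of `C` is a 2TLP. A vertex `v` on
`C` is adjacent only to its two neighbours along `C`: any other edge `vw` is a chord cutting `C`
into two cycles of total length `g + 2`, both of length at least `g`. A vertex `v` off `C` with
three neighbours `x, y, z` on `C` closes two of the three arcs of `C` between them into cycles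
of length (arc + 2), so `2g ≤ (g - 1) + 4`. -/

namespace SimpleGraph

variable {V : Type*} {G : SimpleGraph V}

open Walk

theorem girth_le_length_add_one_of_adj {a b : V} {p : G.Walk a b} (hp : p.IsPath)
    (hab : G.Adj a b) (hlen : 2 ≤ p.length) : G.girth ≤ p.length + 1 := by
  have hcyc : (Walk.cons hab.symm p).IsCycle := by
    refine (cons_isCycle_iff p hab.symm).mpr ⟨hp, fun hmem => ?_⟩
    rw [Sym2.eq_swap] at hmem
    have := hp.length_eq_one_of_mem_edges hmem
    omega
  simpa using girth_le_length hcyc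

theorem girth_le_length_add_two {v x y : V} {p : G.Walk x y} (hp : p.IsPath)
    (hv : v ∉ p.support) (hvx : G.Adj v x) (hvy : G.Adj v y) (hxy : x ≠ y) :
    G.girth ≤ p.length + 2 := by
  have hpos : 0 < p.length := not_nil_iff_lt_length.mp (not_nil_of_ne hxy)
  simpa using girth_le_length_add_one_of_adj (hp.cons hv (h := hvx)) hvy
    (by rw [length_cons]; omega)

theorem two_mul_girth_le_length_add_four {v x y z : V} {p : G.Walk x z} (hp : p.IsPath)
    (hv : v ∉ p.support) (hy : y ∈ p.support) (hvx : G.Adj v x) (hvy : G.Adj v y)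
    (hvz : G.Adj v z) (hxy : x ≠ y) (hyz : y ≠ z) : 2 * G.girth ≤ p.length + 4 := by
  classical
  have hxy' := girth_le_length_add_two (hp.takeUntil hy)
    (fun h => hv (p.support_takeUntil_subset_support hy h)) hvx hvy hxy
  have hyz' := girth_le_length_add_two (hp.dropUntil hy)
    (fun h => hv (p.support_dropUntil_subset_support hy h)) hvy hvz hyz
  have hsplit := congr_arg Walk.length (p.take_spec hy)
  rw [length_append] at hsplit
  omega

theorem Walk.IsCycle.two_mul_girth_le_length_add_three {u v x y z : V} {c : G.Walk u u}
    (hc : c.IsCycle) (hv : v ∉ c.support) (hx : x ∈ c.support) (hy : y ∈ c.support)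
    (hz : z ∈ c.support) (hvx : G.Adj v x) (hvy : G.Adj v y) (hvz : G.Adj v z)
    (hxy : x ≠ y) (hxz : x ≠ z) (hyz : y ≠ z) : 2 * G.girth ≤ c.length + 3 := by
  classical
  set c' := c.rotate x hx
  have hc' : c'.IsCycle := hc.rotate hx
  have hv' : v ∉ c'.support := by simpa [c'] using hv
  have hy' : y ∈ c'.support := by simpa [c'] using hy
  have hz' : z ∈ c'.support := by simpa [c'] using hz
  have hsplit := c'.take_spec hy'
  set P := c'.takeUntil y hy'
  set R := c'.dropUntil y hy'
  have hP : P.IsPath := hc'.isPath_takeUntil hy'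
  have hR : R.IsPath := IsCycle.isPath_of_append_right (not_nil_of_ne hxy) (hsplit.symm ▸ hc')
  have hlen : P.length + R.length = c.length := by
    rw [← length_append, hsplit, length_rotate]
  have hPlen : P.length < c.length := by
    simpa [c'] using length_takeUntil_lt_length hy' hxy.symm
  have hRlen : R.length < c.length := by
    simpa [c'] using length_dropUntil_lt_length hy' hxy.symm
  have hzPR : z ∈ P.support ∨ z ∈ R.support := by
    rw [← hsplit, mem_support_append_iff] at hz'
    exact hz'
  rcases hzPR with hzP | hzR
  · have := two_mul_girth_le_length_add_four hP
      (fun h => hv' (c'.support_takeUntil_subset_support hy' h)) hzP hvx hvz hvy hxz hyz.symm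
    omega
  · have := two_mul_girth_le_length_add_four hR
      (fun h => hv' (c'.support_dropUntil_subset_support hy' h)) hzR hvy hvz hvx hyz hxz.symm
    omega

theorem Walk.IsCycle.length_takeUntil_eq_one_or_of_adj [DecidableEq V] {v w : V} {c : G.Walk v v}
    (hc : c.IsCycle) (hlen : c.length = G.girth) (hw : w ∈ c.support) (hvw : G.Adj v w) :
    (c.takeUntil w hw).length = 1 ∨ (c.takeUntil w hw).length + 1 = c.length := by
  have hsplit := c.take_spec hw
  set P := c.takeUntil w hw
  set R := c.dropUntil w hw
  have hP : P.IsPath := hc.isPath_takeUntil hw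
  have hR : R.IsPath := IsCycle.isPath_of_append_right (not_nil_of_ne hvw.ne) (hsplit.symm ▸ hc)
  have hsum : P.length + R.length = c.length := by rw [← length_append, hsplit]
  have hPpos : 0 < P.length := not_nil_iff_lt_length.mp (not_nil_of_ne hvw.ne)
  have hRpos : 0 < R.length := not_nil_iff_lt_length.mp (not_nil_of_ne hvw.ne.symm)
  by_contra! hlong
  have hPg := girth_le_length_add_one_of_adj hP hvw (by omega)
  have hRg := girth_le_length_add_one_of_adj hR hvw.symm (by omega)
  have := hc.three_le_length
  omega

theorem Walk.IsCycle.not_adj_three_of_length_eq_girth {v x y z : V} {c : G.Walk v v}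
    (hc : c.IsCycle) (hlen : c.length = G.girth) (hx : x ∈ c.support) (hy : y ∈ c.support)
    (hz : z ∈ c.support) (hvx : G.Adj v x) (hvy : G.Adj v y) (hvz : G.Adj v z)
    (hxy : x ≠ y) (hxz : x ≠ z) (hyz : y ≠ z) : False := by
  classical
  have hne {a b : V} (ha : a ∈ c.support) (hb : b ∈ c.support) (hab : a ≠ b) :
      (c.takeUntil a ha).length ≠ (c.takeUntil b hb).length := fun h => hab <| by
    rw [← getVert_length_takeUntil ha, ← getVert_length_takeUntil hb, h]
  have := hne hx hy hxy
  have := hne hx hz hxz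
  have := hne hy hz hyz
  have := hc.length_takeUntil_eq_one_or_of_adj hlen hx hvx
  have := hc.length_takeUntil_eq_one_or_of_adj hlen hy hvy
  have := hc.length_takeUntil_eq_one_or_of_adj hlen hz hvz
  omega

theorem isTotalLimitedPacking_two_of_forall_adj {B : Set V}
    (h : ∀ v x y z, x ∈ B → y ∈ B → z ∈ B → G.Adj v x → G.Adj v y → G.Adj v z →
      x = y ∨ x = z ∨ y = z) :
    IsTotalLimitedPacking G 2 B := by
  intro v
  by_contra! hlt
  have hfin : (B ∩ G.neighborSet v).Finite := Set.finite_of_ncard_pos (by omega)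
  obtain ⟨x, y, z, ⟨hxB, hvx⟩, ⟨hyB, hvy⟩, ⟨hzB, hvz⟩, hxy, hxz, hyz⟩ :=
    (Set.two_lt_ncard_iff hfin).mp hlt
  rcases h v x y z hxB hyB hzB hvx hvy hvz with h | h | h <;> contradiction

theorem isTotalLimitedPacking_of_ncard_le_succ {k : ℕ} {B : Set V} (hB : B.Finite)
    (hcard : B.ncard ≤ k + 1) (h : ∀ v, ¬ B ⊆ G.neighborSet v) :
    IsTotalLimitedPacking G k B := by
  intro v
  by_contra! hlt
  have hall : B ∩ G.neighborSet v = B :=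
    Set.eq_of_subset_of_ncard_le Set.inter_subset_left (by omega) hB
  exact h v (hall ▸ Set.inter_subset_right)

theorem Walk.IsCycle.isTotalLimitedPacking_support {u : V} {c : G.Walk u u} (hc : c.IsCycle)
    (hlen : c.length = G.girth) (hgirth : 4 ≤ G.girth) :
    IsTotalLimitedPacking G 2 {w | w ∈ c.support} := by
  classical
  refine isTotalLimitedPacking_two_of_forall_adj fun v x y z hx hy hz hvx hvy hvz => ?_
  by_contra! hdistinct
  obtain ⟨hxy, hxz, hyz⟩ := hdistinct
  by_cases hv : v ∈ c.support
  · exact (hc.rotate hv).not_adj_three_of_length_eq_girth (by simpa using hlen)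
      (by simpa using hx) (by simpa using hy) (by simpa using hz) hvx hvy hvz hxy hxz hyz
  · have := hc.two_mul_girth_le_length_add_three hv hx hy hz hvx hvy hvz hxy hxz hyz
    omega

theorem Walk.IsCycle.ncard_support {u : V} {c : G.Walk u u} (hc : c.IsCycle) :
    {w | w ∈ c.support}.ncard = c.length := by
  classical
  have hset : {w | w ∈ c.support} = (c.support.tail.toFinset : Set V) := by
    ext w
    rw [Set.mem_ofPred_eq, Finset.mem_coe, List.mem_toFinset, c.mem_support_iff]
    exact or_iff_right_of_imp fun hwu => hwu ▸ end_mem_tail_support hc.not_nil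
  rw [hset, Set.ncard_coe_finset, List.toFinset_card_of_nodup hc.support_nodup,
    List.length_tail, length_support, Nat.add_sub_cancel]

theorem ncard_le_L2t [Finite V] {B : Set V} (hB : IsTotalLimitedPacking G 2 B) :
    B.ncard ≤ L2t G :=
  le_csSup ⟨Nat.card V, by rintro n ⟨B, -, rfl⟩; exact Set.ncard_le_card B⟩ ⟨B, hB, rfl⟩

end SimpleGraph

/-- Let `G` be a graph with a cycle such that not every three (distinct) vertices have a
common neighbor. Then `L_{2,t}(G) ≥ g(G)`. -/
theorem L2t_ge_girth {V : Type*} [Fintype V] (G : SimpleGraph V)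
    (hcyc : ¬ G.IsAcyclic)
    (hΛ : ¬ ∀ a b c : V, a ≠ b → a ≠ c → b ≠ c →
      ∃ w : V, G.Adj w a ∧ G.Adj w b ∧ G.Adj w c) :
    G.girth ≤ L2t G := by
  obtain ⟨u, c, hc, hlen⟩ := exists_girth_eq_length.mpr hcyc
  rcases (three_le_girth hcyc).eq_or_lt with hgirth | hgirth
  · push Not at hΛ
    obtain ⟨a, b, d, hab, had, hbd, hno⟩ := hΛ
    have hcard : ({a, b, d} : Set V).ncard = 3 :=
      Set.ncard_eq_three.mpr ⟨a, b, d, hab, had, hbd, rfl⟩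
    have hB : IsTotalLimitedPacking G 2 {a, b, d} :=
      isTotalLimitedPacking_of_ncard_le_succ (Set.toFinite _) hcard.le fun v hsub =>
        hno v (hsub (by simp)) (hsub (by simp)) (hsub (by simp))
    exact hgirth ▸ hcard ▸ ncard_le_L2t hB
  · calc G.girth = {w | w ∈ c.support}.ncard := hlen.trans hc.ncard_support.symm
      _ ≤ L2t G := ncard_le_L2t (hc.isTotalLimitedPacking_support hlen.symm hgirth)
end

section
/- The vertex set of a shortest cycle in a graph G with girth at least 4 is a set S such that every vertex of G has at most two neighbors in S; in particular, S is a 2-total limited packing of G of size g(G). -/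
open SimpleGraph

/-!
If a vertex `u` had three neighbours `x, y, z` on a cycle `C`, they would cut `C` into three arcs,
each of length at least one. The interiors of the arcs are disjoint, so `u` lies inside at most one
of them, and an arc `P` avoiding `u` closes up through `u` to a cycle of length `|P| + 2`, whence
`|P| ≥ g - 2`. Hence `|C| ≥ 2 (g - 2) + 1`, which fails for `|C| = g ≥ 4`.
-/

namespace SimpleGraph.Walk

variable {V : Type*} {G : SimpleGraph V}

lemma IsPath.girth_le_length_add_two {u a b : V} {r : G.Walk a b} (hr : r.IsPath)
    (hua : G.Adj u a) (hub : G.Adj u b) (hab : a ≠ b) (hu : u ∉ r.support.tail) :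
    G.girth ≤ r.length + 2 := by
  let q : G.Walk b a := cons hub.symm (cons hua .nil)
  have hq : q.IsPath := by simp [q, hab.symm, hua.ne, hub.ne']
  have ha : a ∉ r.support.tail := by
    have := hr.support_nodup
    rw [← r.cons_tail_support, List.nodup_cons] at this
    exact this.1
  have hdisj : r.support.tail.Disjoint q.support.tail := by
    simp [q, hu, ha]
  simpa [q] using girth_le_length (hr.isCycle_append hq hdisj (Or.inr (by simp [q])))

lemma IsCycle.two_mul_girth_le_of_adj_of_append {u x y z : V} {r₁ : G.Walk x y}
    {r₂ : G.Walk y z} {r₃ : G.Walk z x} (hc : (r₁.append (r₂.append r₃)).IsCycle)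
    (hux : G.Adj u x) (huy : G.Adj u y) (huz : G.Adj u z)
    (hxy : x ≠ y) (hyz : y ≠ z) (hzx : z ≠ x) :
    2 * G.girth ≤ r₁.length + r₂.length + r₃.length + 3 := by
  have hp₁ : r₁.IsPath := hc.isPath_of_append_left (by simp [nil_append_iff, not_nil_of_ne hyz])
  have hp₂₃ : (r₂.append r₃).IsPath := hc.isPath_of_append_right (not_nil_of_ne hxy)
  have h₁ := hp₁.girth_le_length_add_two hux huy hxy
  have h₂ := hp₂₃.of_append_left.girth_le_length_add_two huy huz hyz
  have h₃ := hp₂₃.of_append_right.girth_le_length_add_two huz hux hzx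
  have hnodup := hc.support_nodup
  rw [tail_support_append, tail_support_append, List.nodup_append, List.nodup_append] at hnodup
  have hlen₁ : r₁.length ≠ 0 := fun h => hxy (eq_of_length_eq_zero h)
  have hlen₂ : r₂.length ≠ 0 := fun h => hyz (eq_of_length_eq_zero h)
  have hlen₃ : r₃.length ≠ 0 := fun h => hzx (eq_of_length_eq_zero h)
  grind

lemma IsCycle.two_mul_girth_le_of_adj {v u x y z : V} {c : G.Walk v v} (hc : c.IsCycle)
    (hx : x ∈ c.support) (hy : y ∈ c.support) (hz : z ∈ c.support)
    (hux : G.Adj u x) (huy : G.Adj u y) (huz : G.Adj u z)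
    (hxy : x ≠ y) (hyz : y ≠ z) (hzx : z ≠ x) :
    2 * G.girth ≤ c.length + 3 := by
  classical
  have hc' := hc.rotate hx
  rw [← length_rotate c x hx]
  obtain ⟨p, q, hpq⟩ := mem_support_iff_exists_append.mp ((mem_support_rotate_iff ..).2 hy)
  rw [hpq] at hc' ⊢
  have hz' := (mem_support_rotate_iff c x hx).2 hz
  rw [hpq, mem_support_append_iff] at hz'
  rcases hz' with hz' | hz'
  · obtain ⟨p₁, p₂, rfl⟩ := mem_support_iff_exists_append.mp hz'
    rw [← append_assoc] at hc'
    have := hc'.two_mul_girth_le_of_adj_of_append hux huz huy hzx.symm hyz.symm hxy.symm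
    simp only [length_append]
    omega
  · obtain ⟨q₁, q₂, rfl⟩ := mem_support_iff_exists_append.mp hz'
    have := hc'.two_mul_girth_le_of_adj_of_append hux huy huz hxy hyz hzx
    simp only [length_append]
    omega

lemma IsCycle.ncard_setOf_mem_support {v : V} {c : G.Walk v v} (hc : c.IsCycle) :
    {x | x ∈ c.support}.ncard = c.length := by
  classical
  have hsupport : {x | x ∈ c.support} = (c.support.tail.toFinset : Set V) := by
    ext x
    simp only [Set.mem_ofPred_eq, c.mem_support_iff, List.coe_toFinset, or_iff_right_iff_imp]
    rintro rfl
    exact end_mem_tail_support hc.not_nil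
  rw [hsupport, Set.ncard_coe_finset, List.toFinset_card_of_nodup hc.support_nodup, List.length_tail,
    length_support, Nat.add_sub_cancel]

lemma IsCycle.isTotalLimitedPacking_two {v : V} {c : G.Walk v v} (hc : c.IsCycle)
    (hlen : c.length + 3 < 2 * G.girth) :
    IsTotalLimitedPacking G 2 {x | x ∈ c.support} := by
  intro u
  by_contra! h
  obtain ⟨x, y, z, ⟨hx, hux⟩, ⟨hy, huy⟩, ⟨hz, huz⟩, hxy, hxz, hyz⟩ :=
    (Set.two_lt_ncard_iff ((List.finite_toSet _).inter_of_left _)).1 h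
  have := hc.two_mul_girth_le_of_adj hx hy hz hux huy huz hxy hyz hxz.symm
  omega

end SimpleGraph.Walk

theorem shortest_cycle_is_2TLP_general {V : Type*} (G : SimpleGraph V)
    {v : V} (c : G.Walk v v) (hc : c.IsCycle) (hlen : c.length = G.girth)
    (hg : 4 ≤ G.girth) :
    (∀ u : V, ({x : V | x ∈ c.support} ∩ G.neighborSet u).ncard ≤ 2) ∧
      IsTotalLimitedPacking G 2 {x : V | x ∈ c.support} ∧
      ({x : V | x ∈ c.support} : Set V).ncard = G.girth := by
  have hpacking := hc.isTotalLimitedPacking_two (by omega)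
  exact ⟨hpacking, hpacking, hlen ▸ hc.ncard_setOf_mem_support⟩

/-- The vertex set `S` of a shortest cycle in a graph of girth at least `4` satisfies:
every vertex of `G` has at most two neighbors in `S`; in particular `S` is a `2`-total
limited packing of size `g(G)`. -/
theorem shortest_cycle_is_2TLP {V : Type*} [Fintype V] (G : SimpleGraph V)
    {v : V} (c : G.Walk v v) (hc : c.IsCycle) (hlen : c.length = G.girth)
    (hg : 4 ≤ G.girth) :
    (∀ u : V, ({x : V | x ∈ c.support} ∩ G.neighborSet u).ncard ≤ 2) ∧
      IsTotalLimitedPacking G 2 {x : V | x ∈ c.support} ∧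
      ({x : V | x ∈ c.support} : Set V).ncard = G.girth :=
  shortest_cycle_is_2TLP_general G c hc hlen hg
end

section
/- For any graph G of order n ≥ 2 with maximum degree Δ(G), L_{2,t}(G) ≤ n − Δ(G) + 2. -/
open SimpleGraph

/-! A `k`-total limited packing `B` meets the closed neighbourhood of a vertex `v` of maximum
degree in at most `k + 1` vertices, and the remaining vertices of `B` lie among the
`n - Δ - 1` vertices outside `N[v]`. Hence `|B| ≤ n - Δ + k`. -/

theorem ncard_closedNbhd {V : Type*} (G : SimpleGraph V) (v : V) [Fintype (G.neighborSet v)] :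
    (closedNbhd G v).ncard = G.degree v + 1 := by
  rw [closedNbhd, Set.ncard_insert_of_notMem G.notMem_neighborSet_self,
    ← card_neighborFinset_eq_degree, ← Set.ncard_coe_finset, coe_neighborFinset]

namespace IsTotalLimitedPacking

variable {V : Type*} {G : SimpleGraph V} {k : ℕ} {B : Set V}

theorem ncard_inter_closedNbhd_le [Finite V] (hB : IsTotalLimitedPacking G k B) (v : V) :
    (B ∩ closedNbhd G v).ncard ≤ k + 1 :=
  calc (B ∩ closedNbhd G v).ncard ≤ (insert v (B ∩ G.neighborSet v)).ncard := by
        refine Set.ncard_le_ncard ?_ (Set.toFinite _)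
        rintro x ⟨hxB, rfl | hx⟩
        exacts [Set.mem_insert x _, Set.mem_insert_of_mem v ⟨hxB, hx⟩]
    _ ≤ (B ∩ G.neighborSet v).ncard + 1 := Set.ncard_insert_le v _
    _ ≤ k + 1 := Nat.add_le_add_right (hB v) 1

theorem ncard_add_degree_le [Fintype V] [DecidableRel G.Adj] (hB : IsTotalLimitedPacking G k B)
    (v : V) : B.ncard + G.degree v ≤ Fintype.card V + k := by
  have hN := ncard_closedNbhd G v
  have hunion : (B ∪ closedNbhd G v).ncard ≤ Fintype.card V := by
    simpa using Set.ncard_le_ncard (Set.subset_univ (B ∪ closedNbhd G v))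
  have hsplit := Set.ncard_union_add_ncard_inter B (closedNbhd G v)
  have hinter := hB.ncard_inter_closedNbhd_le v
  omega

theorem ncard_add_maxDegree_le [Fintype V] [DecidableRel G.Adj]
    (hB : IsTotalLimitedPacking G k B) : B.ncard + G.maxDegree ≤ Fintype.card V + k := by
  cases isEmpty_or_nonempty V
  · simp [Set.eq_empty_of_isEmpty B]
  · obtain ⟨v, hv⟩ := G.exists_maximal_degree_vertex
    exact hv ▸ hB.ncard_add_degree_le v

end IsTotalLimitedPacking

theorem L2t_le_general {V : Type*} [Fintype V] (G : SimpleGraph V) [DecidableRel G.Adj] :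
    L2t G ≤ Fintype.card V - G.maxDegree + 2 := by
  refine csSup_le ⟨0, ∅, fun v => by simp, Set.ncard_empty V⟩ ?_
  rintro n ⟨B, hB, rfl⟩
  have := hB.ncard_add_maxDegree_le
  omega

/-- For any graph `G` of order `n ≥ 2`, `L_{2,t}(G) ≤ n − Δ(G) + 2`. -/
theorem L2t_le {V : Type*} [Fintype V] (G : SimpleGraph V) [DecidableRel G.Adj]
    (hn : 2 ≤ Fintype.card V) :
    L2t G ≤ Fintype.card V - G.maxDegree + 2 :=
  L2t_le_general G
end

section
/- For any graph G of order n, L_{2,t}(G) + L_{2,t}(Ḡ) ≤ n + 5, where Ḡ is the complement of G. -/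
open SimpleGraph

/-! A maximum `2`-total limited packing of `G` and one of `Gᶜ` can share at most `5` vertices:
any vertex `v` of the intersection sees every other vertex of it either in `G` or in `Gᶜ`,
hence at most `2 + 2` of them. Inclusion–exclusion then bounds the sum of their sizes by
`|V| + 5`. -/

namespace IsTotalLimitedPacking

variable {V : Type*} [Finite V] {G : SimpleGraph V} {k l : ℕ} {B B' : Set V}

theorem ncard_inter_le_of_compl (hB : IsTotalLimitedPacking G k B)
    (hB' : IsTotalLimitedPacking Gᶜ l B') : (B ∩ B').ncard ≤ k + l + 1 := by
  rcases (B ∩ B').eq_empty_or_nonempty with hempty | ⟨v, -⟩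
  · simp [hempty]
  have hsub : B ∩ B' ⊆ insert v (B ∩ G.neighborSet v ∪ B' ∩ Gᶜ.neighborSet v) := by
    intro w ⟨hwB, hwB'⟩
    by_cases hwv : w = v
    · exact .inl hwv
    have hw : w ∈ G.neighborSet v ∪ Gᶜ.neighborSet v := by
      rw [neighborSet_union_compl_neighborSet_eq]
      exact hwv
    exact .inr (hw.imp (⟨hwB, ·⟩) (⟨hwB', ·⟩))
  calc (B ∩ B').ncard
      ≤ (insert v (B ∩ G.neighborSet v ∪ B' ∩ Gᶜ.neighborSet v)).ncard :=
        Set.ncard_le_ncard hsub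
    _ ≤ (B ∩ G.neighborSet v ∪ B' ∩ Gᶜ.neighborSet v).ncard + 1 := Set.ncard_insert_le _ _
    _ ≤ (B ∩ G.neighborSet v).ncard + (B' ∩ Gᶜ.neighborSet v).ncard + 1 := by
        gcongr; exact Set.ncard_union_le _ _
    _ ≤ k + l + 1 := by gcongr; exacts [hB v, hB' v]

end IsTotalLimitedPacking

theorem exists_isTotalLimitedPacking_ncard_eq_L2t {V : Type*} [Finite V] (G : SimpleGraph V) :
    ∃ B : Set V, IsTotalLimitedPacking G 2 B ∧ B.ncard = L2t G := by
  refine Nat.sSup_mem (s := {n | ∃ B : Set V, IsTotalLimitedPacking G 2 B ∧ B.ncard = n})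
    ⟨0, ∅, fun v => by simp, Set.ncard_empty V⟩ ⟨Nat.card V, ?_⟩
  rintro n ⟨B, -, rfl⟩
  exact Set.ncard_le_card B

/-- For any graph `G` of order `n`, `L_{2,t}(G) + L_{2,t}(Ġ) ≤ n + 5`. -/
theorem L2t_nordhaus_gaddum {V : Type*} [Fintype V] (G : SimpleGraph V) :
    L2t G + L2t Gᶜ ≤ Fintype.card V + 5 := by
  obtain ⟨B, hB, hBcard⟩ := exists_isTotalLimitedPacking_ncard_eq_L2t G
  obtain ⟨B', hB', hB'card⟩ := exists_isTotalLimitedPacking_ncard_eq_L2t Gᶜ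
  have hinter : (B ∩ B').ncard ≤ 5 := hB.ncard_inter_le_of_compl hB'
  have hunion : (B ∪ B').ncard ≤ Fintype.card V := by
    simpa only [Nat.card_eq_fintype_card] using Set.ncard_le_card (B ∪ B')
  have hsizes := Set.ncard_union_add_ncard_inter B B'
  omega
end

section
/- For any tree T of order n, L_{2,t}(T) − L₂(T) ≤ ⌊n/3⌋. -/
open SimpleGraph

/-! A `2`-total limited packing `B` of a forest induces a subforest of maximum degree two.
Repeatedly taking a leaf `u` of it, the neighbour `w` of `u` and the other neighbour `x` of `w`
(if there is one), keeping `u` and `w` and discarding `x`, leaves a set `C ⊆ B` in which every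
vertex has at most one neighbour in `C`, at the cost of at most every third vertex of `B`. Such a `C` is a `2`-limited
packing: a vertex of `C` sees itself and at most one more vertex of `C`, and any other vertex sees at
most two vertices of `B`. Hence `|B| - L₂(T) ≤ |B| / 3 ≤ n / 3`. -/

open Finset

namespace SimpleGraph

variable {V : Type*} {G : SimpleGraph V}

theorem IsAcyclic.exists_existsUnique_adj [Finite V] (hG : G.IsAcyclic) {a b : V}
    (hab : G.Adj a b) : ∃ u, ∃! w, G.Adj u w := by
  have : Nonempty V := ⟨a⟩
  obtain ⟨u, v, p, hp, hmax⟩ := Walk.exists_isPath_forall_isPath_length_le_length G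
  have hnil : ¬p.Nil := fun h => by
    simpa [Walk.length_eq_zero_iff.mpr h] using hmax a b _ (Path.singleton hab).isPath
  refine ⟨u, p.snd, p.adj_snd hnil, fun w hw => hG.eq_snd_of_adj_start hp hw ?_⟩
  by_contra hw'
  simpa using hmax _ _ _ (hp.cons hw' (h := hw.symm))

theorem IsAcyclic.exists_mem_adj_forall_adj_eq (hG : G.IsAcyclic) {B : Finset V} {a b : V}
    (ha : a ∈ B) (hb : b ∈ B) (hab : G.Adj a b) :
    ∃ u ∈ B, ∃ w ∈ B, G.Adj u w ∧ ∀ c ∈ B, G.Adj u c → c = w := by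
  obtain ⟨u, w, huw, hu⟩ :=
    (hG.induce (B : Set V)).exists_existsUnique_adj (a := ⟨a, ha⟩) (b := ⟨b, hb⟩) hab
  exact ⟨u, u.2, w, w.2, huw, fun c hc huc => congrArg Subtype.val (hu ⟨c, hc⟩ huc)⟩

variable [DecidableRel G.Adj]

def InducedDegreeLE (G : SimpleGraph V) [DecidableRel G.Adj] (B : Finset V) (k : ℕ) : Prop :=
  ∀ v ∈ B, #{w ∈ B | G.Adj v w} ≤ k

theorem InducedDegreeLE.mono {B C : Finset V} {k : ℕ} (hB : InducedDegreeLE G B k) (hCB : C ⊆ B) :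
    InducedDegreeLE G C k :=
  fun v hv => (card_le_card (filter_subset_filter _ hCB)).trans (hB v (hCB hv))

theorem ncard_coe_inter_neighborSet (C : Finset V) (v : V) :
    ((C : Set V) ∩ G.neighborSet v).ncard = #{w ∈ C | G.Adj v w} := by
  rw [← Set.ncard_coe_finset]
  congr 1
  ext
  simp

theorem _root_.IsTotalLimitedPacking.inducedDegreeLE {B : Finset V} {k : ℕ}
    (hB : IsTotalLimitedPacking G k B) : InducedDegreeLE G B k :=
  fun v _ => (ncard_coe_inter_neighborSet B v).ge.trans (hB v)

theorem InducedDegreeLE.isLimitedPacking {B C : Finset V} {k : ℕ} (hC : InducedDegreeLE G C k)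
    (hB : IsTotalLimitedPacking G (k + 1) B) (hCB : C ⊆ B) : IsLimitedPacking G (k + 1) C := by
  intro v
  by_cases hv : v ∈ C
  · rw [closedNbhd, Set.inter_insert_of_mem (by exact_mod_cast hv)]
    refine (Set.ncard_insert_le _ _).trans ?_
    rw [ncard_coe_inter_neighborSet]
    exact Nat.add_le_add_right (hC v hv) 1
  · rw [closedNbhd, Set.inter_insert_of_notMem (by exact_mod_cast hv)]
    exact (Set.ncard_le_ncard (Set.inter_subset_inter_left _ (by exact_mod_cast hCB))).trans (hB v)

variable [DecidableEq V]

theorem InducedDegreeLE.sdiff_union_of_leaf {B S X : Finset V} {u w : V}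
    (hleaf : ∀ c ∈ B, G.Adj u c → c = w) (hX : X = {x ∈ B | G.Adj w x}.erase u)
    (hS : InducedDegreeLE G ((B \ insert u (insert w X)) \ S) 1) :
    InducedDegreeLE G (B \ (S ∪ X)) 1 := by
  have hw : ∀ c ∈ B, G.Adj w c → c ∉ X → c = u := by
    intro c hc hwc hcX
    by_contra h
    exact hcX (by simp [hX, h, hc, hwc])
  intro v hv
  simp only [mem_sdiff, mem_union, not_or] at hv
  obtain ⟨hvB, hvS, hvX⟩ := hv
  by_cases hvu : v = u
  · subst hvu
    refine (card_le_card fun c hc => ?_).trans (card_singleton w).le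
    simp only [mem_filter, mem_sdiff, mem_union, not_or, Finset.mem_singleton] at hc ⊢
    exact hleaf c hc.1.1 hc.2
  by_cases hvw : v = w
  · subst hvw
    refine (card_le_card fun c hc => ?_).trans (card_singleton u).le
    simp only [mem_filter, mem_sdiff, mem_union, not_or, Finset.mem_singleton] at hc ⊢
    exact hw c hc.1.1 hc.2 hc.1.2.2
  refine le_trans (card_le_card fun c hc => ?_) (hS v ?_)
  · simp only [mem_filter, mem_sdiff, mem_union, not_or, mem_insert] at hc ⊢
    obtain ⟨⟨hcB, hcS, hcX⟩, hvc⟩ := hc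
    refine ⟨⟨⟨hcB, ?_, ?_, hcX⟩, hcS⟩, hvc⟩
    · rintro rfl
      exact hvw (hleaf v hvB hvc.symm)
    · rintro rfl
      exact hvu (hw v hvB hvc.symm hvX)
  · simp [hvB, hvu, hvw, hvX, hvS]

theorem IsAcyclic.exists_inducedDegreeLE_one_sdiff (hG : G.IsAcyclic) (B : Finset V)
    (hB : InducedDegreeLE G B 2) : ∃ S ⊆ B, 3 * #S ≤ #B ∧ InducedDegreeLE G (B \ S) 1 := by
  induction B using Finset.strongInduction with
  | H B ih =>
  by_cases hedge : ∃ a ∈ B, ∃ b ∈ B, G.Adj a b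
  swap
  · push Not at hedge
    refine ⟨∅, empty_subset _, by simp, fun v hv => ?_⟩
    rw [sdiff_empty] at hv ⊢
    simp [filter_false_of_mem (hedge v hv)]
  obtain ⟨a, ha, b, hb, hab⟩ := hedge
  obtain ⟨u, hu, w, hw, huw, hleaf⟩ := hG.exists_mem_adj_forall_adj_eq ha hb hab
  set X := {x ∈ B | G.Adj w x}.erase u with hX
  have hXB : X ⊆ B := (erase_subset _ _).trans (filter_subset _ _)
  have hcardX : #X ≤ 1 := by
    have := hB w hw
    rw [hX, card_erase_of_mem (by simp [hu, huw.symm])]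
    omega
  set R := insert u (insert w X)
  have hRB : R ⊆ B := by simp [R, insert_subset_iff, hu, hw, hXB]
  have hcardR : #R = #X + 2 := by
    rw [card_insert_of_notMem, card_insert_of_notMem] <;> simp [hX, huw.ne]
  obtain ⟨S, hSB, hcardS, hS⟩ :=
    ih (B \ R) (sdiff_ssubset hRB (insert_nonempty _ _)) (hB.mono sdiff_subset)
  refine ⟨S ∪ X, union_subset (hSB.trans sdiff_subset) hXB, ?_,
    hS.sdiff_union_of_leaf hleaf hX⟩
  have := card_union_le S X
  have := card_sdiff_of_subset hRB
  have := card_le_card hRB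
  clear_value X R
  omega

theorem IsAcyclic.exists_isLimitedPacking_subset (hG : G.IsAcyclic) {B : Finset V}
    (hB : IsTotalLimitedPacking G 2 B) :
    ∃ C ⊆ B, IsLimitedPacking G 2 C ∧ #B ≤ #C + #B / 3 := by
  obtain ⟨S, hSB, hS, hBS⟩ := hG.exists_inducedDegreeLE_one_sdiff B hB.inducedDegreeLE
  refine ⟨B \ S, sdiff_subset, hBS.isLimitedPacking hB sdiff_subset, ?_⟩
  rw [card_sdiff_of_subset hSB]
  omega

end SimpleGraph

theorem ncard_le_L2 {V : Type*} [Finite V] {G : SimpleGraph V} {B : Set V}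
    (hB : IsLimitedPacking G 2 B) : B.ncard ≤ L2 G :=
  le_csSup ⟨Nat.card V, by rintro _ ⟨C, -, rfl⟩; exact Set.ncard_le_card C⟩ ⟨B, hB, rfl⟩

/-- For any tree `T` of order `n`, `L_{2,t}(T) − L₂(T) ≤ ⌊n/3⌋`. -/
theorem L2t_sub_L2_le_of_tree {V : Type*} [Fintype V] (T : SimpleGraph V)
    (hT : T.IsTree) :
    L2t T - L2 T ≤ Fintype.card V / 3 := by
  classical
  rw [Nat.sub_le_iff_le_add]
  refine csSup_le ⟨0, ∅, fun v => by simp, Set.ncard_empty V⟩ ?_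
  rintro _ ⟨B, hB, rfl⟩
  obtain ⟨B, rfl⟩ := (Set.toFinite B).exists_finset_coe
  obtain ⟨C, -, hC, hBC⟩ := hT.isAcyclic.exists_isLimitedPacking_subset hB
  have hCL2 : #C ≤ L2 T := by simpa using ncard_le_L2 hC
  have hBV : #B ≤ Fintype.card V := card_le_univ B
  rw [Set.ncard_coe_finset]
  omega
end

section
/- Let G be the graph obtained from a graph F by attaching a pendant vertex to every vertex of F (the corona F ⊙ K₁). Then L_{2,t}(G) = ρₒ(F) + |V(F)|, where ρₒ(F) is the open packing number of F. -/
open SimpleGraph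

/-- The corona `F ⊙ K₁`: attach a pendant vertex (`Sum.inr v`) to every vertex
(`Sum.inl v`) of `F`. -/
def corona {V : Type*} (F : SimpleGraph V) : SimpleGraph (V ⊕ V) where
  Adj x y := match x, y with
    | .inl a, .inl b => F.Adj a b
    | .inl a, .inr b => a = b
    | .inr a, .inl b => a = b
    | .inr _, .inr _ => False
  symm := by
    constructor
    rintro (a | a) (b | b) h
    · exact F.adj_symm h
    · exact h.symm
    · exact h.symm
    · exact h
  loopless := by
    constructor
    rintro (a | a) h
    · exact F.irrefl h
    · exact h

/-- An open packing: pairwise disjoint open neighborhoods. -/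
def IsOpenPacking {V : Type*} (G : SimpleGraph V) (P : Set V) : Prop :=
  ∀ u ∈ P, ∀ v ∈ P, u ≠ v → G.neighborSet u ∩ G.neighborSet v = ∅

/-- The open packing number `ρₒ(G)`. -/
noncomputable def openPackingNumber {V : Type*} (G : SimpleGraph V) : ℕ :=
  sSup {n | ∃ P : Set V, IsOpenPacking G P ∧ P.ncard = n}

/-!
A pendant vertex `u_v` has the single neighbour `v`, so only the neighbourhoods `N(v) ∪ {u_v}` of
the vertices of `F` constrain a `2`-total limited packing `B`. An open packing of `F` together with
all pendant vertices meets each of them in at most two vertices, giving `≥`. Conversely, let `A`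
and `C` be the parts of `B` in `F` and among the pendants, and `D` the set of vertices with two
neighbours in `A`. Deleting one such neighbour for each `v ∈ D` turns `A` into an open packing, so
`|A| ≤ ρₒ(F) + |D|`; and `D` misses every `v` with `u_v ∈ C`, so `|C| + |D| ≤ |V(F)|`.
-/

open Set

lemma Set.ncard_eq_ncard_preimage_inl_add_ncard_preimage_inr {α β : Type*} {s : Set (α ⊕ β)}
    (hs : s.Finite) : s.ncard = (Sum.inl ⁻¹' s).ncard + (Sum.inr ⁻¹' s).ncard := by
  conv_lhs => rw [← image_preimage_inl_union_image_preimage_inr s]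
  rw [ncard_union_eq disjoint_image_inl_image_inr (hs.preimage Sum.inl_injective.injOn |>.image _)
      (hs.preimage Sum.inr_injective.injOn |>.image _),
    ncard_image_of_injective _ Sum.inl_injective, ncard_image_of_injective _ Sum.inr_injective]

lemma Set.ncard_image_inl_union_range_inr {α β : Type*} [Finite α] [Finite β] (s : Set α) :
    (Sum.inl '' s ∪ range (Sum.inr : β → α ⊕ β)).ncard = s.ncard + Nat.card β := by
  rw [ncard_eq_ncard_preimage_inl_add_ncard_preimage_inr (toFinite _)]
  simp [preimage_union, Sum.inl_injective.preimage_image, preimage_inl_range_inr,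
    preimage_inr_image_inl]

section Packing

variable {V : Type*} {G : SimpleGraph V}

lemma L2t_le_s19 {m : ℕ} (h : ∀ B, IsTotalLimitedPacking G 2 B → B.ncard ≤ m) : L2t G ≤ m :=
  csSup_le ⟨0, ∅, fun _ ↦ by simp, ncard_empty V⟩ (by rintro n ⟨B, hB, rfl⟩; exact h B hB)

variable [Finite V]

lemma bddAbove_ncard_setOf (p : Set V → Prop) : BddAbove {n | ∃ s, p s ∧ s.ncard = n} :=
  ⟨Nat.card V, by rintro n ⟨s, -, rfl⟩; exact ncard_le_card s⟩

lemma IsOpenPacking.ncard_le_openPackingNumber {P : Set V} (hP : IsOpenPacking G P) :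
    P.ncard ≤ openPackingNumber G :=
  le_csSup (bddAbove_ncard_setOf _) ⟨P, hP, rfl⟩

lemma exists_isOpenPacking_ncard_eq_openPackingNumber (G : SimpleGraph V) :
    ∃ P, IsOpenPacking G P ∧ P.ncard = openPackingNumber G :=
  Nat.sSup_mem (s := {n | ∃ P, IsOpenPacking G P ∧ P.ncard = n})
    ⟨0, ∅, fun _ h ↦ h.elim, ncard_empty V⟩ (bddAbove_ncard_setOf _)

lemma IsTotalLimitedPacking.ncard_le_L2t {B : Set V} (hB : IsTotalLimitedPacking G 2 B) :
    B.ncard ≤ L2t G :=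
  le_csSup (bddAbove_ncard_setOf _) ⟨B, hB, rfl⟩

lemma IsOpenPacking.ncard_inter_neighborSet_le_one {P : Set V} (hP : IsOpenPacking G P) (v : V) :
    (P ∩ G.neighborSet v).ncard ≤ 1 := by
  refine (ncard_le_one (toFinite _)).2 fun a ⟨ha, hva⟩ b ⟨hb, hvb⟩ ↦ by_contra fun hab ↦ ?_
  have : v ∈ G.neighborSet a ∩ G.neighborSet b := ⟨hva.symm, hvb.symm⟩
  simp [hP a ha b hb hab] at this

/-- Removing one vertex of `B ∩ N(v)` for every `v` whose neighbourhood holds two vertices of `B`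
leaves an open packing. -/
lemma IsTotalLimitedPacking.ncard_le_openPackingNumber_add {B : Set V}
    (hB : IsTotalLimitedPacking G 2 B) :
    B.ncard ≤ openPackingNumber G + {v | 2 ≤ (B ∩ G.neighborSet v).ncard}.ncard := by
  set D := {v | 2 ≤ (B ∩ G.neighborSet v).ncard}
  have hpick : ∀ v, ∃ u, v ∈ D → u ∈ B ∩ G.neighborSet v := fun v ↦ by
    by_cases hv : v ∈ D
    · obtain ⟨u, hu⟩ := nonempty_of_ncard_ne_zero (zero_lt_two.trans_le hv).ne'
      exact ⟨u, fun _ ↦ hu⟩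
    · exact ⟨v, fun h ↦ (hv h).elim⟩
  choose f hf using hpick
  have hpacking : IsOpenPacking G (B \ f '' D) := by
    intro u ⟨hu, hufD⟩ w ⟨hw, hwfD⟩ huw
    by_contra hne
    obtain ⟨x, hxu, hxw⟩ := nonempty_iff_ne_empty.2 hne
    have hpair : {u, w} ⊆ B ∩ G.neighborSet x := by
      rintro y (rfl | rfl)
      exacts [⟨hu, hxu.symm⟩, ⟨hw, hxw.symm⟩]
    have hxD : x ∈ D := (ncard_pair huw).symm.le.trans (ncard_le_ncard hpair)
    have hpair_eq : {u, w} = B ∩ G.neighborSet x :=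
      eq_of_subset_of_ncard_le hpair ((hB x).trans (ncard_pair huw).ge)
    rcases hpair_eq ▸ hf x hxD with h | h
    · exact hufD ⟨x, hxD, h⟩
    · exact hwfD ⟨x, hxD, h⟩
  calc B.ncard ≤ (B \ f '' D).ncard + (f '' D).ncard := by
        rw [ncard_sdiff_add_ncard]; exact ncard_le_ncard subset_union_left
    _ ≤ openPackingNumber G + D.ncard :=
        add_le_add hpacking.ncard_le_openPackingNumber (ncard_image_le (toFinite D))

end Packing

section Corona

variable {V : Type*} (F : SimpleGraph V)

lemma corona_preimage_inl_neighborSet_inl (v : V) :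
    Sum.inl ⁻¹' (corona F).neighborSet (.inl v) = F.neighborSet v := rfl

lemma corona_preimage_inr_neighborSet_inl (v : V) :
    Sum.inr ⁻¹' (corona F).neighborSet (.inl v) = {v} := by
  ext; exact eq_comm

lemma corona_neighborSet_inr (v : V) : (corona F).neighborSet (.inr v) = {.inl v} := by
  ext (b | b)
  · exact eq_comm.trans Sum.inl_injective.eq_iff.symm
  · exact iff_of_false id Sum.inr_ne_inl

variable [Finite V]

lemma ncard_inter_corona_neighborSet_inl (B : Set (V ⊕ V)) (v : V) :
    (B ∩ (corona F).neighborSet (.inl v)).ncard =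
      (Sum.inl ⁻¹' B ∩ F.neighborSet v).ncard + (Sum.inr ⁻¹' B ∩ {v}).ncard := by
  rw [ncard_eq_ncard_preimage_inl_add_ncard_preimage_inr (toFinite _), preimage_inter,
    preimage_inter, corona_preimage_inl_neighborSet_inl, corona_preimage_inr_neighborSet_inl]

lemma IsTotalLimitedPacking.ncard_le_openPackingNumber_add_card_of_corona {B : Set (V ⊕ V)}
    (hB : IsTotalLimitedPacking (corona F) 2 B) :
    B.ncard ≤ openPackingNumber F + Nat.card V := by
  set A := Sum.inl ⁻¹' B
  set C := Sum.inr ⁻¹' B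
  set D := {v | 2 ≤ (A ∩ F.neighborSet v).ncard}
  have hcount (v : V) : (A ∩ F.neighborSet v).ncard + (C ∩ {v}).ncard ≤ 2 :=
    ncard_inter_corona_neighborSet_inl F B v ▸ hB (.inl v)
  have hA : IsTotalLimitedPacking F 2 A := fun v ↦ (Nat.le_add_right _ _).trans (hcount v)
  -- a pendant vertex in `B` leaves room for only one `B`-neighbour of its support in `F`
  have hCD : Disjoint C D := disjoint_left.2 fun v hvC hvD ↦ by
    have := hcount v
    rw [inter_eq_right.2 (singleton_subset_iff.2 hvC), ncard_singleton] at this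
    exact absurd hvD (by change ¬2 ≤ _; omega)
  calc B.ncard = A.ncard + C.ncard :=
        ncard_eq_ncard_preimage_inl_add_ncard_preimage_inr (toFinite B)
    _ ≤ openPackingNumber F + D.ncard + C.ncard := by
        gcongr; exact hA.ncard_le_openPackingNumber_add
    _ = openPackingNumber F + (C ∪ D).ncard := by rw [ncard_union_eq hCD]; ring
    _ ≤ openPackingNumber F + Nat.card V := by gcongr; exact ncard_le_card _

lemma IsOpenPacking.isTotalLimitedPacking_corona {P : Set V} (hP : IsOpenPacking F P) :
    IsTotalLimitedPacking (corona F) 2 (Sum.inl '' P ∪ range Sum.inr) := by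
  rintro (v | v)
  · rw [ncard_inter_corona_neighborSet_inl]
    have hpendant : (Sum.inr ⁻¹' (Sum.inl '' P ∪ range Sum.inr) ∩ {v}).ncard ≤ 1 :=
      (ncard_le_ncard inter_subset_right).trans (ncard_singleton v).le
    have := hP.ncard_inter_neighborSet_le_one v
    simp only [preimage_union, Sum.inl_injective.preimage_image, preimage_inl_range_inr,
      union_empty] at *
    omega
  · rw [corona_neighborSet_inr]
    exact (ncard_le_ncard inter_subset_right).trans (by simp)

end Corona

/-- For the corona `G = F ⊙ K₁`, `L_{2,t}(G) = ρₒ(F) + |V(F)|`. -/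
theorem L2t_corona {V : Type*} [Fintype V] (F : SimpleGraph V) :
    L2t (corona F) = openPackingNumber F + Fintype.card V := by
  rw [← Nat.card_eq_fintype_card]
  refine le_antisymm (L2t_le_s19 fun B hB ↦ hB.ncard_le_openPackingNumber_add_card_of_corona F) ?_
  obtain ⟨P, hP, hPcard⟩ := exists_isOpenPacking_ncard_eq_openPackingNumber F
  calc openPackingNumber F + Nat.card V
      = (Sum.inl '' P ∪ range Sum.inr).ncard := by rw [ncard_image_inl_union_range_inr, hPcard]
    _ ≤ L2t (corona F) := (hP.isTotalLimitedPacking_corona F).ncard_le_L2t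
end
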